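/- Let S_1, S_2 be algebraic subtori of (ℂ*)^n corresponding to primitive sublattices A, B ⊆ ℤ^n with (A ⊗ ℂ) ∩ (B ⊗ ℂ) = 0. Then the cardinality of S_1 ∩ S_2 equals the product d_1 · d_2 ⋯ d_b of the elementary divisors of the image of B in ℤ^n/A. -/

import Mathlib

open Complex

/-- The exponential `t ↦ e^{2πit}` as a unit of `ℂ`. -/
noncomputable def expu (t : ℂ) : ℂˣ :=
  Units.mk0 (Complex.exp (2 * Real.pi * Complex.I * t)) (Complex.exp_ne_zero _)

/-- The coordinatewise exponential `exp_L : ℂⁿ → (ℂ*)ⁿ` as a group homomorphism. -/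
noncomputable def expL (n : ℕ) : Multiplicative (Fin n → ℂ) →* (Fin n → ℂˣ) where
  toFun t i := expu (Multiplicative.toAdd t i)
  map_one' := by
    funext i
    apply Units.ext
    simp [expu]
  map_mul' a b := by
    funext i
    apply Units.ext
    simp [expu, mul_add, Complex.exp_add]

/-- Inclusion of the lattice `ℤⁿ` into `ℂⁿ`. -/
def zc {n : ℕ} (v : Fin n → ℤ) : Fin n → ℂ := fun i => (v i : ℂ)

/-- The complexification `A ⊗ ℂ` of a sublattice `A ⊆ ℤⁿ`, as the ℂ-span of `A` in `ℂⁿ`. -/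
noncomputable def VC {n : ℕ} (A : Submodule ℤ (Fin n → ℤ)) : Submodule ℂ (Fin n → ℂ) :=
  Submodule.span ℂ (zc '' (A : Set (Fin n → ℤ)))

/-- The subtorus `exp_L(V)` of `(ℂ*)ⁿ` associated to a ℂ-subspace `V ⊆ ℂⁿ`. -/
noncomputable def expT {n : ℕ} (V : Submodule ℂ (Fin n → ℂ)) : Subgroup (Fin n → ℂˣ) :=
  Subgroup.map (expL n) (AddSubgroup.toSubgroup V.toAddSubgroup)

/-- A sublattice `A ⊆ ℤⁿ` is primitive if `ℤⁿ/A` is torsion-free. -/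
def IsPrimitive {n : ℕ} (A : Submodule ℤ (Fin n → ℤ)) : Prop :=
  ∀ (m : ℤ) (x : Fin n → ℤ), m ≠ 0 → m • x ∈ A → x ∈ A
/-!
A point of `S₁ ∩ S₂` is `exp t` with `t ∈ B ⊗ ℂ` and `t ∈ A ⊗ ℂ + ℤⁿ`. Lift the basis
`dⱼ eⱼ` of the image of `B` in `ℤⁿ/A ≅ ℤᴺ` to a basis `βⱼ` of `B` and write `t = ∑ sⱼ βⱼ`.
Projecting to `(ℤⁿ/A) ⊗ ℂ = ℂᴺ`, which kills `A ⊗ ℂ`, the second condition says exactly that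
every `sⱼ dⱼ` is an integer. So `c ↦ exp (∑ (cⱼ / dⱼ) βⱼ)` maps `ℤᵇ` onto `S₁ ∩ S₂`. It sends `c`
to `1` iff `∑ (cⱼ / dⱼ) βⱼ ∈ ℤⁿ`, iff (as `B` is primitive) this vector lies in `B`, iff
`dⱼ ∣ cⱼ` for all `j`. Hence `S₁ ∩ S₂ ≅ ∏ ℤ/dⱼ`.
-/

lemma Submodule.eq_span_range_of_mkQ_eq_basis {R M ι : Type*} [Ring R] [AddCommGroup M]
    [Module R M] [Fintype ι] {A B : Submodule R M} (hAB : Disjoint A B)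
    (g : Module.Basis ι R (B.map A.mkQ)) {β : ι → M} (hβB : ∀ j, β j ∈ B)
    (hβ : ∀ j, A.mkQ (β j) = g j) : B = Submodule.span R (Set.range β) := by
  refine le_antisymm (fun y hy => ?_) (Submodule.span_le.2 (Set.range_subset_iff.2 hβB))
  set c := g.repr ⟨A.mkQ y, Submodule.mem_map_of_mem hy⟩
  have hmk : A.mkQ (∑ j, c j • β j) = A.mkQ y := by
    simpa only [map_sum, map_smul, hβ, Submodule.coe_sum, Submodule.coe_smul] using
      congrArg Subtype.val (g.sum_repr ⟨A.mkQ y, Submodule.mem_map_of_mem hy⟩)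
  have hdiffA : ∑ j, c j • β j - y ∈ A := (Submodule.Quotient.eq A).1 hmk
  have hdiffB : ∑ j, c j • β j - y ∈ B :=
    sub_mem (Submodule.sum_mem _ fun j _ => Submodule.smul_mem _ _ (hβB j)) hy
  rw [← sub_eq_zero.1 (Submodule.disjoint_def.1 hAB _ hdiffA hdiffB)]
  exact Submodule.sum_mem _ fun j _ => Submodule.smul_mem _ _ (Submodule.subset_span ⟨j, rfl⟩)

lemma MonoidHom.card_range_eq_of_ker_eq {G H K : Type*} [Group G] [Group H] [Group K]
    (φ : G →* H) (ψ : G →* K) (hψ : Function.Surjective ψ) (h : φ.ker = ψ.ker) :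
    Nat.card φ.range = Nat.card K :=
  Nat.card_congr ((QuotientGroup.quotientKerEquivRange φ).symm.trans
    ((QuotientGroup.quotientMulEquivOfEq h).trans
      (QuotientGroup.quotientKerEquivOfSurjective ψ hψ))).toEquiv

def reduceMod {ι : Type*} (d : ι → ℕ) : (ι → ℤ) →+ ((j : ι) → ZMod (d j)) :=
  AddMonoidHom.pi fun j => (Int.castAddHom (ZMod (d j))).comp (Pi.evalAddMonoidHom _ j)

lemma reduceMod_surjective {ι : Type*} (d : ι → ℕ) : Function.Surjective (reduceMod d) :=
  fun x => ⟨fun j => (x j).cast, funext fun j => ZMod.intCast_zmod_cast (x j)⟩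

lemma reduceMod_eq_zero_iff {ι : Type*} (d : ι → ℕ) (c : ι → ℤ) :
    reduceMod d c = 0 ↔ ∀ j, (d j : ℤ) ∣ c j := by
  simp [reduceMod, funext_iff, ZMod.intCast_zmod_eq_zero_iff_dvd]

section Exponential

variable {n : ℕ}

lemma expu_eq_one_iff (x : ℂ) : expu x = 1 ↔ ∃ k : ℤ, x = k := by
  have h2πi : 2 * (Real.pi : ℂ) * I ≠ 0 := by simp [Real.pi_ne_zero]
  rw [Units.ext_iff, Units.val_one, expu, Units.val_mk0, Complex.exp_eq_one_iff,
    mul_comm _ x]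
  simp_rw [mul_left_inj' h2πi]

lemma expL_ofAdd_eq_one_iff (t : Fin n → ℂ) :
    expL n (.ofAdd t) = 1 ↔ ∃ m, t = zc m := by
  simp only [funext_iff, Pi.one_apply, zc]
  exact (forall_congr' fun i => expu_eq_one_iff (t i)).trans Classical.skolem

lemma expL_ofAdd_zc (m : Fin n → ℤ) : expL n (.ofAdd (zc m)) = 1 :=
  (expL_ofAdd_eq_one_iff _).2 ⟨m, rfl⟩

lemma mem_expT_iff {V : Submodule ℂ (Fin n → ℂ)} {u : Fin n → ℂˣ} :
    u ∈ expT V ↔ ∃ t ∈ V, expL n (.ofAdd t) = u := by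
  rw [expT, Subgroup.mem_map]
  exact ⟨fun ⟨x, hx, hu⟩ => ⟨x.toAdd, hx, hu⟩, fun ⟨t, ht, hu⟩ => ⟨.ofAdd t, ht, hu⟩⟩

lemma expL_ofAdd_mem_expT_iff {V : Submodule ℂ (Fin n → ℂ)} {t : Fin n → ℂ} :
    expL n (.ofAdd t) ∈ expT V ↔ ∃ m, t - zc m ∈ V := by
  rw [mem_expT_iff]
  constructor
  · rintro ⟨v, hv, hvt⟩
    obtain ⟨m, hm⟩ := (expL_ofAdd_eq_one_iff (t - v)).1
      (by rw [ofAdd_sub, map_div, hvt, div_self'])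
    exact ⟨m, by rwa [← hm, sub_sub_cancel]⟩
  · rintro ⟨m, hm⟩
    exact ⟨t - zc m, hm, by rw [ofAdd_sub, map_div, expL_ofAdd_zc, div_one]⟩

end Exponential

section Lattice

variable {n : ℕ}

lemma zc_injective : Function.Injective (zc (n := n)) :=
  fun x y h => funext fun i => by simpa [zc] using congrFun h i

@[simp]
lemma zc_zero : zc (0 : Fin n → ℤ) = 0 := by
  funext i; simp [zc]

lemma zc_sub (x y : Fin n → ℤ) : zc (x - y) = zc x - zc y := by
  funext i; simp [zc]

lemma zc_smul (k : ℤ) (x : Fin n → ℤ) : zc (k • x) = (k : ℂ) • zc x := by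
  funext i; simp [zc]

lemma zc_sum_smul {ι : Type*} [Fintype ι] (c : ι → ℤ) (v : ι → Fin n → ℤ) :
    zc (∑ i, c i • v i) = ∑ i, (c i : ℂ) • zc (v i) := by
  funext j; simp [zc, Finset.sum_apply]

lemma disjoint_of_disjoint_VC {A B : Submodule ℤ (Fin n → ℤ)} (h : VC A ⊓ VC B = ⊥) :
    Disjoint A B := by
  refine Submodule.disjoint_def.2 fun x hxA hxB => zc_injective ?_
  have hx : zc x ∈ VC A ⊓ VC B :=
    ⟨Submodule.subset_span ⟨x, hxA, rfl⟩, Submodule.subset_span ⟨x, hxB, rfl⟩⟩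
  rw [h, Submodule.mem_bot] at hx
  rw [hx, zc_zero]

lemma VC_span_range {ι : Type*} [Fintype ι] (v : ι → Fin n → ℤ) :
    VC (Submodule.span ℤ (Set.range v)) = Submodule.span ℂ (Set.range (zc ∘ v)) := by
  refine le_antisymm (Submodule.span_le.2 ?_) (Submodule.span_mono ?_)
  · rintro _ ⟨x, hx, rfl⟩
    obtain ⟨c, rfl⟩ := (Submodule.mem_span_range_iff_exists_fun ℤ).1 hx
    rw [zc_sum_smul]
    exact Submodule.sum_mem _ fun i _ => Submodule.smul_mem _ _ (Submodule.subset_span ⟨i, rfl⟩)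
  · rw [Set.range_comp]
    exact Set.image_mono Submodule.subset_span

noncomputable def complexify {m : ℕ} (f : (Fin n → ℤ) →ₗ[ℤ] (Fin m → ℤ)) :
    (Fin n → ℂ) →ₗ[ℂ] (Fin m → ℂ) :=
  Matrix.toLin' ((LinearMap.toMatrix' f).map (Int.cast : ℤ → ℂ))

lemma complexify_zc {m : ℕ} (f : (Fin n → ℤ) →ₗ[ℤ] (Fin m → ℤ)) (x : Fin n → ℤ) :
    complexify f (zc x) = zc (f x) := by
  funext i
  rw [complexify, Matrix.toLin'_apply]
  change _ = Int.castRingHom ℂ (f x i)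
  rw [← LinearMap.toMatrix'_mulVec f x, RingHom.map_mulVec]
  rfl

lemma VC_le_ker_complexify {m : ℕ} {A : Submodule ℤ (Fin n → ℤ)}
    {f : (Fin n → ℤ) →ₗ[ℤ] (Fin m → ℤ)} (h : A ≤ LinearMap.ker f) :
    VC A ≤ LinearMap.ker (complexify f) := by
  rw [VC, Submodule.span_le]
  rintro _ ⟨x, hx, rfl⟩
  rw [SetLike.mem_coe, LinearMap.mem_ker, complexify_zc, LinearMap.mem_ker.1 (h hx), zc_zero]

end Lattice

section Smith

variable {n N b : ℕ} (β : Fin b → Fin n → ℤ) (d : Fin b → ℕ)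

noncomputable def fracComb : (Fin b → ℤ) →+ (Fin n → ℂ) :=
  AddMonoidHom.mk' (fun c => ∑ j, ((c j : ℂ) / d j) • zc (β j)) fun c c' => by
    simp only [Pi.add_apply, Int.cast_add, add_div, add_smul, Finset.sum_add_distrib]

noncomputable def torusParam : Multiplicative (Fin b → ℤ) →* (Fin n → ℂˣ) :=
  (expL n).comp (AddMonoidHom.toMultiplicative (fracComb β d))

lemma fracComb_apply (c : Fin b → ℤ) :
    fracComb β d c = ∑ j, ((c j : ℂ) / d j) • zc (β j) :=
  rfl

lemma torusParam_ofAdd (c : Fin b → ℤ) :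
    torusParam β d (.ofAdd c) = expL n (.ofAdd (fracComb β d c)) :=
  rfl

variable {β d} {f : (Fin n → ℤ) →ₗ[ℤ] (Fin N → ℤ)} {ι : Fin b → Fin N}

lemma complexify_sum_smul_zc_apply (hι : Function.Injective ι)
    (hfβ : ∀ j, f (β j) = Pi.single (ι j) (d j : ℤ)) (s : Fin b → ℂ) (k : Fin b) :
    complexify f (∑ j, s j • zc (β j)) (ι k) = s k * d k := by
  simp [map_sum, complexify_zc, hfβ, zc, Pi.single_apply, hι.eq_iff]

variable {A B : Submodule ℤ (Fin n → ℤ)}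

lemma torusParam_mem_expT_right (hβB : ∀ j, β j ∈ B) (c : Fin b → ℤ) :
    torusParam β d (.ofAdd c) ∈ expT (VC B) :=
  mem_expT_iff.2 ⟨_, Submodule.sum_mem _ fun j _ =>
    Submodule.smul_mem _ _ (Submodule.subset_span ⟨β j, hβB j, rfl⟩), rfl⟩

lemma torusParam_mem_expT_left (hf : Function.Surjective f) (hker : LinearMap.ker f = A)
    (hd : ∀ j, d j ≠ 0) (hfβ : ∀ j, f (β j) = Pi.single (ι j) (d j : ℤ)) (c : Fin b → ℤ) :
    torusParam β d (.ofAdd c) ∈ expT (VC A) := by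
  choose g hg using fun j => hf (Pi.single (ι j) 1)
  have hα : ∀ j, β j - (d j : ℤ) • g j ∈ A := fun j => by
    rw [← hker, LinearMap.mem_ker, map_sub, map_smul, hg, hfβ]
    funext k; simp [Pi.single_apply]
  have hdC : ∀ j, (d j : ℂ) ≠ 0 := fun j => Nat.cast_ne_zero.2 (hd j)
  rw [torusParam_ofAdd, expL_ofAdd_mem_expT_iff]
  refine ⟨∑ j, c j • g j, ?_⟩
  have hsplit : ∑ j, ((c j : ℂ) / d j) • zc (β j) - zc (∑ j, c j • g j) =
      ∑ j, ((c j : ℂ) / d j) • zc (β j - (d j : ℤ) • g j) := by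
    simp only [zc_sum_smul, zc_sub, zc_smul, smul_sub, smul_smul, Int.cast_natCast,
      div_mul_cancel₀, hdC, ne_eq, not_false_eq_true, Finset.sum_sub_distrib]
  rw [fracComb_apply, hsplit]
  exact Submodule.sum_mem _ fun j _ =>
    Submodule.smul_mem _ _ (Submodule.subset_span ⟨_, hα j, rfl⟩)

lemma range_torusParam (hf : Function.Surjective f) (hker : LinearMap.ker f = A)
    (hβ : B = Submodule.span ℤ (Set.range β)) (hd : ∀ j, d j ≠ 0) (hι : Function.Injective ι)
    (hfβ : ∀ j, f (β j) = Pi.single (ι j) (d j : ℤ)) :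
    (torusParam β d).range = expT (VC A) ⊓ expT (VC B) := by
  refine le_antisymm ?_ fun u ⟨huA, huB⟩ => ?_
  · rintro _ ⟨c, rfl⟩
    exact ⟨torusParam_mem_expT_left hf hker hd hfβ c.toAdd,
      torusParam_mem_expT_right (fun j => hβ ▸ Submodule.subset_span ⟨j, rfl⟩) c.toAdd⟩
  obtain ⟨t, ht, rfl⟩ := mem_expT_iff.1 huB
  obtain ⟨m, hm⟩ := expL_ofAdd_mem_expT_iff.1 huA
  rw [hβ, VC_span_range] at ht
  obtain ⟨s, rfl⟩ := (Submodule.mem_span_range_iff_exists_fun ℂ).1 ht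
  have hPm : complexify f (∑ j, s j • (zc ∘ β) j) = zc (f m) := by
    rw [← complexify_zc, ← sub_eq_zero, ← map_sub]
    exact VC_le_ker_complexify hker.ge hm
  have hs : ∀ k, s k = (f m (ι k) : ℂ) / d k := fun k => by
    rw [eq_div_iff (Nat.cast_ne_zero.2 (hd k)), ← complexify_sum_smul_zc_apply hι hfβ, ← zc]
    exact congrFun hPm (ι k)
  refine ⟨.ofAdd fun k => f m (ι k), ?_⟩
  rw [torusParam_ofAdd, fracComb_apply]
  simp only [hs, Function.comp_apply]

lemma mem_of_zc_eq_fracComb (hB : IsPrimitive B) (hβB : ∀ j, β j ∈ B) (hd : ∀ j, d j ≠ 0)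
    {m : Fin n → ℤ} {c : Fin b → ℤ} (h : zc m = fracComb β d c) : m ∈ B := by
  have hdvd : ∀ j, d j ∣ ∏ i, d i := fun j => Finset.dvd_prod_of_mem d (Finset.mem_univ j)
  have hclear : ((∏ i, d i : ℕ) : ℤ) • m = ∑ j, (c j * ((∏ i, d i) / d j : ℕ)) • β j := by
    refine zc_injective ?_
    rw [zc_smul, h, fracComb_apply, zc_sum_smul, Finset.smul_sum]
    refine Finset.sum_congr rfl fun j _ => ?_
    rw [smul_smul]
    congr 1
    rw [Int.cast_mul, Int.cast_natCast, Int.cast_natCast,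
      Nat.cast_div (hdvd j) (Nat.cast_ne_zero.2 (hd j))]
    ring
  have hD : ((∏ i, d i : ℕ) : ℤ) ≠ 0 :=
    Nat.cast_ne_zero.2 (Finset.prod_ne_zero_iff.2 fun j _ => hd j)
  refine hB _ m hD ?_
  rw [hclear]
  exact Submodule.sum_mem _ fun j _ => Submodule.smul_mem _ _ (hβB j)

lemma torusParam_ofAdd_eq_one_iff (hB : IsPrimitive B) (hβ : B = Submodule.span ℤ (Set.range β))
    (hd : ∀ j, d j ≠ 0) (hι : Function.Injective ι)
    (hfβ : ∀ j, f (β j) = Pi.single (ι j) (d j : ℤ)) (c : Fin b → ℤ) :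
    torusParam β d (.ofAdd c) = 1 ↔ ∀ j, (d j : ℤ) ∣ c j := by
  have hdC : ∀ j, (d j : ℂ) ≠ 0 := fun j => Nat.cast_ne_zero.2 (hd j)
  rw [torusParam_ofAdd, expL_ofAdd_eq_one_iff]
  constructor
  · rintro ⟨m, hm⟩
    have hβB : ∀ j, β j ∈ B := fun j => hβ ▸ Submodule.subset_span ⟨j, rfl⟩
    obtain ⟨u, rfl⟩ := (Submodule.mem_span_range_iff_exists_fun ℤ).1
      (hβ ▸ mem_of_zc_eq_fracComb hB hβB hd hm.symm)
    intro k
    have hk := congrFun (congrArg (complexify f) hm) (ι k)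
    rw [fracComb_apply, zc_sum_smul, complexify_sum_smul_zc_apply hι hfβ,
      complexify_sum_smul_zc_apply hι hfβ, div_mul_cancel₀ _ (hdC k)] at hk
    exact ⟨u k, by exact_mod_cast hk.trans (mul_comm _ _)⟩
  · intro hc
    choose k hk using hc
    refine ⟨∑ j, k j • β j, ?_⟩
    rw [fracComb_apply, zc_sum_smul]
    refine Finset.sum_congr rfl fun j _ => ?_
    rw [hk, Int.cast_mul, Int.cast_natCast, mul_div_cancel_left₀ _ (hdC j)]

end Smith

theorem card_expT_inf_expT {n N b : ℕ} {A B : Submodule ℤ (Fin n → ℤ)}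
    (f : (Fin n → ℤ) →ₗ[ℤ] (Fin N → ℤ)) (hf : Function.Surjective f)
    (hker : LinearMap.ker f = A) (hB : IsPrimitive B) (β : Fin b → Fin n → ℤ)
    (hβ : B = Submodule.span ℤ (Set.range β)) (d : Fin b → ℕ) (hd : ∀ j, d j ≠ 0)
    {ι : Fin b → Fin N} (hι : Function.Injective ι)
    (hfβ : ∀ j, f (β j) = Pi.single (ι j) (d j : ℤ)) :
    Nat.card (expT (VC A) ⊓ expT (VC B) : Subgroup (Fin n → ℂˣ)) = ∏ j, d j := by
  have hker_eq : (torusParam β d).ker = (AddMonoidHom.toMultiplicative (reduceMod d)).ker := by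
    ext c
    simp only [MonoidHom.mem_ker]
    exact (torusParam_ofAdd_eq_one_iff hB hβ hd hι hfβ c.toAdd).trans
      (reduceMod_eq_zero_iff d c.toAdd).symm
  rw [← range_torusParam hf hker hβ hd hι hfβ,
    MonoidHom.card_range_eq_of_ker_eq _ _ (reduceMod_surjective d) hker_eq,
    Nat.card_congr Multiplicative.toAdd, Nat.card_pi]
  simp

theorem stmt_10_general (n : ℕ) (A B : Submodule ℤ (Fin n → ℤ))
    (hB : IsPrimitive B)
    (hAB : VC A ⊓ VC B = ⊥)
    (b N : ℕ) (hbN : b ≤ N)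
    (e' : Module.Basis (Fin N) ℤ ((Fin n → ℤ) ⧸ A))
    (d : Fin b → ℕ) (hd : ∀ j, 0 < d j)
    (gb' : Module.Basis (Fin b) ℤ (B.map A.mkQ))
    (hgb' : ∀ j, (gb' j : (Fin n → ℤ) ⧸ A) = (d j : ℤ) • e' (Fin.castLE hbN j)) :
    Nat.card (expT (VC A) ⊓ expT (VC B) : Subgroup (Fin n → ℂˣ)) = ∏ j, d j := by
  choose β hβB hβ using fun j => Submodule.mem_map.1 (gb' j).2
  refine card_expT_inf_expT (e'.equivFun.toLinearMap ∘ₗ A.mkQ)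
    (e'.equivFun.surjective.comp A.mkQ_surjective)
    (by rw [LinearEquiv.ker_comp, Submodule.ker_mkQ]) hB β
    (Submodule.eq_span_range_of_mkQ_eq_basis (disjoint_of_disjoint_VC hAB) gb' hβB hβ) d
    (fun j => (hd j).ne') (Fin.castLE_injective hbN) fun j => ?_
  funext k
  simp [hβ, hgb', Pi.single_apply, Finsupp.single_apply, eq_comm]

/-- Let `S₁, S₂ ⊆ (ℂ*)ⁿ` be the subtori corresponding to primitive sublattices
`A, B ⊆ ℤⁿ` with `(A⊗ℂ) ∩ (B⊗ℂ) = 0`. If `d₁ | ... | d_b` are the elementary divisors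
of the image of `B` in `ℤⁿ/A` (Smith normal form data), then `|S₁ ∩ S₂| = d₁⋯d_b`. -/
theorem stmt_10 (n : ℕ) (A B : Submodule ℤ (Fin n → ℤ))
    (hA : IsPrimitive A) (hB : IsPrimitive B)
    (hAB : VC A ⊓ VC B = ⊥)
    (b N : ℕ) (hbN : b ≤ N)
    (e' : Module.Basis (Fin N) ℤ ((Fin n → ℤ) ⧸ A))
    (d : Fin b → ℕ) (hd : ∀ j, 0 < d j)
    (hdiv : ∀ i j : Fin b, i ≤ j → d i ∣ d j)
    (gb' : Module.Basis (Fin b) ℤ (B.map A.mkQ))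
    (hgb' : ∀ j, (gb' j : (Fin n → ℤ) ⧸ A) = (d j : ℤ) • e' (Fin.castLE hbN j)) :
    Nat.card (expT (VC A) ⊓ expT (VC B) : Subgroup (Fin n → ℂˣ)) = ∏ j, d j :=
  stmt_10_general n A B hB hAB b N hbN e' d hd gb' hgb'
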